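/- arXiv:1311.7683 — 5 statements merged into one kernel-verified Lean document; each statement's English description precedes it below -/
import Mathlib

section
/- Let G be a weighted concurrent game, ρ a play of G, σ_Agt a strategy profile, and C ⊆ Agt a coalition. Then dev(ρ, σ_Agt) ⊆ C if, and only if, there exists a strategy σ'_C for the coalition C such that ρ is compatible with the profile (σ_{-C}, σ'_C) from its initial state ρ_0, i.e. ρ ∈ Out_G(ρ_0, (σ_{-C}, σ'_C)). -/
open Filter

section Defs

variable {Stat Agt Act : Type}

/-- A weighted concurrent game: finite sets of states/players/actions are imposed
via `Fintype` assumptions in the theorems. -/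
structure CGame (Stat Agt Act : Type) where
  s0 : Stat
  Tab : Stat → (Agt → Act) → Stat
  w : Agt → Stat → ℤ

/-- A history: an initial state followed by a finite alternating list of moves and states. -/
abbrev Hist (Stat Agt Act : Type) := Stat × List ((Agt → Act) × Stat)

abbrev Strategy (Stat Agt Act : Type) := Hist Stat Agt Act → Act

abbrev Profile (Stat Agt Act : Type) := Agt → Strategy Stat Agt Act

/-- A play: an infinite alternating sequence of states and moves. -/
structure Play (Stat Agt Act : Type) where
  state : ℕ → Stat
  move : ℕ → Agt → Act

/-- The prefix `ρ_{≤ m}` of a play: the history containing states `0..m` and moves `0..m-1`. -/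
def Play.pref (ρ : Play Stat Agt Act) (m : ℕ) : Hist Stat Agt Act :=
  (ρ.state 0, (List.range m).map fun j => (ρ.move j, ρ.state (j + 1)))

/-- `ρ` respects the transition function of `G` (it is a play of `G`). -/
def IsPlay (G : CGame Stat Agt Act) (ρ : Play Stat Agt Act) : Prop :=
  ∀ j, ρ.state (j + 1) = G.Tab (ρ.state j) (ρ.move j)

/-- The deviators from move `a` to move `a'`. -/
def devMove (a a' : Agt → Act) : Set Agt := {A | a A ≠ a' A}

/-- The deviators of a play with respect to a strategy profile. -/
def devPlay (σ : Profile Stat Agt Act) (ρ : Play Stat Agt Act) : Set Agt :=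
  ⋃ i : ℕ, devMove (ρ.move i) fun A => σ A (ρ.pref i)

/-- The deviators of the prefix `ρ_{≤ i}` with respect to a strategy profile. -/
def devPref (σ : Profile Stat Agt Act) (ρ : Play Stat Agt Act) (i : ℕ) : Set Agt :=
  ⋃ j ∈ Finset.range i, devMove (ρ.move j) fun A => σ A (ρ.pref j)

/-- A play is compatible with the strategy of coalition `C` (move condition). -/
def Compatible (C : Set Agt) (σ : Profile Stat Agt Act) (ρ : Play Stat Agt Act) : Prop :=
  ∀ j, ∀ A ∈ C, ρ.move j A = σ A (ρ.pref j)

/-- `Out_G(s, σ_C)`: plays of `G` starting at `s` compatible with `σ` on coalition `C`. -/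
def OutFrom (G : CGame Stat Agt Act) (s : Stat) (C : Set Agt) (σ : Profile Stat Agt Act) :
    Set (Play Stat Agt Act) :=
  {ρ | ρ.state 0 = s ∧ IsPlay G ρ ∧ Compatible C σ ρ}

open Classical in
/-- The profile `(σ_{-C}, σ'_C)`: agrees with `σ'` on `C` and with `σ` outside `C`. -/
noncomputable def combine (C : Set Agt) (σ σ' : Profile Stat Agt Act) : Profile Stat Agt Act :=
  fun A => if A ∈ C then σ' A else σ A

/-- Mean payoff of player `A` along a play. -/
noncomputable def payoffPlay (G : CGame Stat Agt Act) (A : Agt) (ρ : Play Stat Agt Act) : ℝ :=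
  Filter.liminf
    (fun m => (∑ l ∈ Finset.range (m + 1), (G.w A (ρ.state l) : ℝ)) / (m : ℝ)) Filter.atTop

def histLast (h : Hist Stat Agt Act) : Stat := (h.2.map Prod.snd).getLastD h.1

/-- The history of length `m+1` produced by the strategy profile `σ` from `s0`. -/
def outHist (G : CGame Stat Agt Act) (σ : Profile Stat Agt Act) : ℕ → Hist Stat Agt Act
  | 0 => (G.s0, [])
  | m + 1 =>
    let h := outHist G σ m
    (h.1, h.2 ++ [(fun A => σ A h, G.Tab (histLast h) fun A => σ A h)])

/-- The unique outcome of a full strategy profile from `s0`. -/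
def outcomePlay (G : CGame Stat Agt Act) (σ : Profile Stat Agt Act) : Play Stat Agt Act :=
  ⟨fun m => histLast (outHist G σ m), fun m A => σ A (outHist G σ m)⟩

/-- The payoff vector of a strategy profile. -/
noncomputable def payoffProfile (G : CGame Stat Agt Act) (σ : Profile Stat Agt Act) (A : Agt) :
    ℝ :=
  payoffPlay G A (outcomePlay G σ)

/-! The deviator game `D(G)`. -/

abbrev DState (Stat Agt : Type) := Stat × Set Agt

abbrev DHist (Stat Agt Act : Type) :=
  DState Stat Agt × List (((Agt → Act) × (Agt → Act)) × DState Stat Agt)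

abbrev EveStrategy (Stat Agt Act : Type) := DHist Stat Agt Act → Agt → Act

/-- A play of the deviator game: states together with Eve's and Adam's moves. -/
structure DPlay (Stat Agt Act : Type) where
  state : ℕ → DState Stat Agt
  eveMove : ℕ → Agt → Act
  adamMove : ℕ → Agt → Act

/-- Transition function of the deviator game. -/
def DTab (G : CGame Stat Agt Act) (q : DState Stat Agt) (a a' : Agt → Act) : DState Stat Agt :=
  (G.Tab q.1 a', q.2 ∪ devMove a a')

def DPlay.pref (ρ : DPlay Stat Agt Act) (m : ℕ) : DHist Stat Agt Act :=
  (ρ.state 0, (List.range m).map fun j => ((ρ.eveMove j, ρ.adamMove j), ρ.state (j + 1)))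

/-- Projection of a history of `D(G)` to a history of `G` (first state component, Adam's move). -/
def projHist (h : DHist Stat Agt Act) : Hist Stat Agt Act :=
  (h.1.1, h.2.map fun x => (x.1.2, x.2.1))

/-- Projection `π` of a play of `D(G)` to a play of `G`. -/
def projPlay (ρ : DPlay Stat Agt Act) : Play Stat Agt Act :=
  ⟨fun i => (ρ.state i).1, ρ.adamMove⟩

/-- The Eve strategy `π(σ_Agt)` associated with a strategy profile. -/
def eveOf (σ : Profile Stat Agt Act) : EveStrategy Stat Agt Act :=
  fun h A => σ A (projHist h)

/-- `δ(ρ)`: the limit of the deviator components along a play of `D(G)`. -/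
def delta (ρ : DPlay Stat Agt Act) : Set Agt := ⋃ i : ℕ, (ρ.state i).2

/-- Play of the deviator game from state `q` where Eve follows `σE` and Adam is unconstrained. -/
def IsDPlayFrom (G : CGame Stat Agt Act) (q : DState Stat Agt) (σE : EveStrategy Stat Agt Act)
    (ρ : DPlay Stat Agt Act) : Prop :=
  ρ.state 0 = q ∧
    ∀ j, ρ.eveMove j = σE (ρ.pref j) ∧
      ρ.state (j + 1) = DTab G (ρ.state j) (ρ.eveMove j) (ρ.adamMove j)

/-- Outcome of an Eve strategy from the initial state `(s0, ∅)` of `D(G)`. -/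
def IsOutcome (G : CGame Stat Agt Act) (σE : EveStrategy Stat Agt Act)
    (ρ : DPlay Stat Agt Act) : Prop :=
  IsDPlayFrom G (G.s0, ∅) σE ρ

/-- An Eve strategy is winning for objective `Ω` if all its outcomes belong to `Ω`. -/
def Winning (G : CGame Stat Agt Act) (σE : EveStrategy Stat Agt Act)
    (Ω : Set (DPlay Stat Agt Act)) : Prop :=
  ∀ ρ, IsOutcome G σE ρ → ρ ∈ Ω

/-- `σ` is `k`-resilient: `C`-resilient for every coalition `C` of size at most `k`. -/
def kResilient (G : CGame Stat Agt Act) (σ : Profile Stat Agt Act) (k : ℕ) : Prop :=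
  ∀ C : Set Agt, C.ncard ≤ k → ∀ σ' : Profile Stat Agt Act, ∀ A ∈ C,
    payoffProfile G (combine C σ σ') A ≤ payoffProfile G σ A

/-- `σ` is `(t,r)`-immune: `(C,r)`-immune for every coalition `C` of size at most `t`. -/
def tImmune (G : CGame Stat Agt Act) (σ : Profile Stat Agt Act) (t : ℕ) (r : ℝ) : Prop :=
  ∀ C : Set Agt, C.ncard ≤ t → ∀ σ' : Profile Stat Agt Act, ∀ A ∉ C,
    payoffProfile G σ A - r ≤ payoffProfile G (combine C σ σ') A

/-- The resilience objective `Re(k,p)`. -/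
def ReObj (G : CGame Stat Agt Act) (k : ℕ) (p : Agt → ℝ) : Set (DPlay Stat Agt Act) :=
  {ρ | k < (delta ρ).ncard} ∪
    {ρ | (delta ρ).ncard = k ∧ ∀ A ∈ delta ρ, payoffPlay G A (projPlay ρ) ≤ p A} ∪
    {ρ | (delta ρ).ncard < k ∧ ∀ A : Agt, payoffPlay G A (projPlay ρ) ≤ p A}

/-- The immunity objective `I(t,r,p)`. -/
def ImmObj (G : CGame Stat Agt Act) (t : ℕ) (r : ℝ) (p : Agt → ℝ) : Set (DPlay Stat Agt Act) :=
  {ρ | t < (delta ρ).ncard} ∪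
    {ρ | ∀ A ∉ delta ρ, p A - r ≤ payoffPlay G A (projPlay ρ)}

/-- Mean payoff (liminf) of a weight function on states of `D(G)` along a play. -/
noncomputable def MP (u : DState Stat Agt → ℤ) (ρ : DPlay Stat Agt Act) : ℝ :=
  Filter.liminf
    (fun m => (∑ l ∈ Finset.range (m + 1), (u (ρ.state l) : ℝ)) / (m : ℝ)) Filter.atTop

/-- Mean payoff (limsup) of a weight function on states of `D(G)` along a play. -/
noncomputable def MPSup (u : DState Stat Agt → ℤ) (ρ : DPlay Stat Agt Act) : ℝ :=
  Filter.limsup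
    (fun m => (∑ l ∈ Finset.range (m + 1), (u (ρ.state l) : ℝ)) / (m : ℝ)) Filter.atTop

end Defs

section Deviators

variable {Stat Agt Act : Type}

theorem devPlay_subset_iff_compatible_compl {σ : Profile Stat Agt Act} {ρ : Play Stat Agt Act}
    {C : Set Agt} : devPlay σ ρ ⊆ C ↔ Compatible Cᶜ σ ρ := by
  simp only [devPlay, Set.iUnion_subset_iff, Compatible, Set.mem_compl_iff]
  exact forall_congr' fun j => ⟨fun h A hA => not_not.1 (mt (@h A) hA),
    fun h A hdev => by_contra fun hA => hdev (h A hA)⟩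

theorem compatible_univ_combine_iff {C : Set Agt} {σ σ' : Profile Stat Agt Act}
    {ρ : Play Stat Agt Act} :
    Compatible Set.univ (combine C σ σ') ρ ↔ Compatible C σ' ρ ∧ Compatible Cᶜ σ ρ := by
  simp only [Compatible, combine, Set.mem_univ, true_implies, Set.mem_compl_iff]
  refine ⟨fun h => ⟨fun j A hA => by simpa [hA] using h j A,
    fun j A hA => by simpa [hA] using h j A⟩, fun ⟨hC, hCc⟩ j A => ?_⟩
  by_cases hA : A ∈ C
  · simpa [hA] using hC j A hA
  · simpa [hA] using hCc j A hA

def Play.replay (ρ : Play Stat Agt Act) : Profile Stat Agt Act :=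
  fun A h => ρ.move h.2.length A

theorem Play.compatible_replay (C : Set Agt) (ρ : Play Stat Agt Act) :
    Compatible C ρ.replay ρ := by
  intro j A _
  simp [Play.replay, Play.pref]

end Deviators

theorem statement0_general {Stat Agt Act : Type}
    (G : CGame Stat Agt Act) (ρ : Play Stat Agt Act) (σ : Profile Stat Agt Act)
    (C : Set Agt) (hρ : IsPlay G ρ) :
    devPlay σ ρ ⊆ C ↔
      ∃ σ' : Profile Stat Agt Act,
        ρ ∈ OutFrom G (ρ.state 0) Set.univ (combine C σ σ') := by
  rw [devPlay_subset_iff_compatible_compl]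
  constructor
  · intro hσ
    exact ⟨ρ.replay, rfl, hρ, compatible_univ_combine_iff.2 ⟨ρ.compatible_replay C, hσ⟩⟩
  · rintro ⟨σ', -, -, hcompat⟩
    exact (compatible_univ_combine_iff.1 hcompat).2

theorem statement0 {Stat Agt Act : Type} [Fintype Stat] [Fintype Agt] [Fintype Act]
    (G : CGame Stat Agt Act) (ρ : Play Stat Agt Act) (σ : Profile Stat Agt Act)
    (C : Set Agt) (hρ : IsPlay G ρ) :
    devPlay σ ρ ⊆ C ↔
      ∃ σ' : Profile Stat Agt Act,
        ρ ∈ OutFrom G (ρ.state 0) Set.univ (combine C σ σ') :=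
  statement0_general G ρ σ C hρ
end

section
/- Let G be a weighted concurrent game, σ_Agt a strategy profile in G, and σ_E = π(σ_Agt) the associated strategy of Eve in the deviator game D(G). If ρ is an outcome of σ_E in D(G) (from the initial state (s0, ∅)), then dev(π(ρ), σ_Agt) = δ(ρ), i.e. the set of deviators of the projected play with respect to σ_Agt equals the limit of the deviator components along ρ. -/
open Filter

lemma projHist_pref {Stat Agt Act : Type} (ρ : DPlay Stat Agt Act) (j : ℕ) :
    projHist (ρ.pref j) = (projPlay ρ).pref j := by
  simp [projHist, DPlay.pref, Play.pref, projPlay, List.map_map, Function.comp]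

lemma devMove_comm {Agt Act : Type} (a a' : Agt → Act) : devMove a a' = devMove a' a := by
  ext A; simp [devMove, ne_comm]

lemma state_snd_eq {Stat Agt Act : Type} (G : CGame Stat Agt Act) (σ : Profile Stat Agt Act)
    (ρ : DPlay Stat Agt Act) (hρ : IsOutcome G (eveOf σ) ρ) (i : ℕ) :
    (ρ.state i).2 = devPref σ (projPlay ρ) i := by
  induction i with
  | zero =>
      rw [hρ.1]
      simp [devPref]
  | succ i ih =>
      rw [(hρ.2 i).2, (hρ.2 i).1]
      have : devPref σ (projPlay ρ) (i + 1) =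
          devPref σ (projPlay ρ) i ∪
            devMove ((projPlay ρ).move i) (fun A => σ A ((projPlay ρ).pref i)) := by
        simp [devPref, Finset.range_add_one, Set.biUnion_union, Set.union_comm]
      rw [this, DTab, ih]
      have heve : eveOf σ (ρ.pref i) = fun A => σ A ((projPlay ρ).pref i) := by
        funext A; rw [eveOf, projHist_pref]
      rw [heve, devMove_comm]
      rfl

theorem statement1 {Stat Agt Act : Type} [Fintype Stat] [Fintype Agt] [Fintype Act]
    (G : CGame Stat Agt Act) (σ : Profile Stat Agt Act) (ρ : DPlay Stat Agt Act)
    (hρ : IsOutcome G (eveOf σ) ρ) :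
    devPlay σ (projPlay ρ) = delta ρ := by
  ext A
  simp only [devPlay, delta, Set.mem_iUnion]
  constructor
  · rintro ⟨i, hi⟩
    refine ⟨i + 1, ?_⟩
    rw [state_snd_eq G σ ρ hρ]
    exact Set.mem_biUnion (Finset.self_mem_range_succ i) hi
  · rintro ⟨i, hi⟩
    rw [state_snd_eq G σ ρ hρ] at hi
    simp only [devPref, Set.mem_iUnion, Finset.mem_range] at hi
    obtain ⟨j, _, hj⟩ := hi
    exact ⟨j, hj⟩
end

section
/- Let G be a weighted concurrent game, σ_Agt a strategy profile in G, and σ_E = π(σ_Agt) the associated strategy of Eve in the deviator game D(G). If ρ is any play of G (a play compatible with some strategy, i.e. satisfying the transition relation), then the play ρ' of D(G) defined by ρ'_i = (ρ_i, dev(ρ_{≤i}, σ_Agt)) with moves a_i(ρ') = (σ_Agt(ρ_{≤i}), a_i(ρ)) is an outcome of σ_E in D(G). -/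
open Filter

theorem statement2 {Stat Agt Act : Type} [Fintype Stat] [Fintype Agt] [Fintype Act]
    (G : CGame Stat Agt Act) (σ : Profile Stat Agt Act) (ρ : Play Stat Agt Act)
    (h0 : ρ.state 0 = G.s0) (hρ : IsPlay G ρ) :
    IsOutcome G (eveOf σ)
      ⟨fun i => (ρ.state i, devPref σ ρ i), fun i A => σ A (ρ.pref i), ρ.move⟩ := by
  constructor
  · simp [h0, devPref]
  · intro j
    have hproj : projHist
        (DPlay.pref ⟨fun i => (ρ.state i, devPref σ ρ i), fun i A => σ A (ρ.pref i), ρ.move⟩ j)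
        = ρ.pref j := by
      simp [projHist, DPlay.pref, Play.pref, List.map_map, Function.comp]
    constructor
    · funext A
      simp [eveOf, hproj]
    · simp only [DTab]
      refine Prod.ext ?_ ?_
      · exact (hρ j).symm ▸ rfl
      · show devPref σ ρ (j + 1) = devPref σ ρ j ∪ devMove (fun A => σ A (ρ.pref j)) (ρ.move j)
        have : devMove (fun A => σ A (ρ.pref j)) (ρ.move j)
            = devMove (ρ.move j) (fun A => σ A (ρ.pref j)) := by
          ext A; simp [devMove, ne_comm]
        rw [this, devPref, devPref, Finset.range_add_one]
        simp [Set.biUnion_insert, Set.union_comm]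
end

section
/- Let G be a weighted concurrent game with players numbered Agt = {A_1,…,A_n}, W the maximal absolute weight, v the multidimensional weight function on the deviator game D(G), and p ∈ ℝ^Agt a payoff vector with |p(A_i)| ≤ W for all i. For any play ρ of D(G), the implication (δ(ρ) = ∅ ⟹ payoff_{A_i}(π(ρ)) = p(A_i)) holds if, and only if, MP_{v_{2n+i}}(ρ) ≥ p(A_i) and MPSup_{v_{3n+i}}(ρ) ≥ −p(A_i). -/
open Filter

section Weights

variable {Stat Act : Type} {n : ℕ}

/-- `W`: the maximal absolute value of the weights. -/
noncomputable def Wmax (G : CGame Stat (Fin n) Act) [Fintype Stat] : ℤ :=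
  ((Finset.univ : Finset (Fin n × Stat)).sup fun x => (G.w x.1 x.2).natAbs : ℕ)

open Classical in
/-- Dimension `i` (for `i ∈ [1,n]`) of the weight function `v`, used for immunity. -/
noncomputable def vImm (G : CGame Stat (Fin n) Act) [Fintype Stat] (t : ℕ) (i : Fin n)
    (q : DState Stat (Fin n)) : ℤ :=
  if q.2.ncard ≤ t ∧ i ∉ q.2 then G.w i q.1 else Wmax G

open Classical in
/-- Dimension `n + i` of the weight function `v`, used for resilience. -/
noncomputable def vRes (G : CGame Stat (Fin n) Act) [Fintype Stat] (k : ℕ) (i : Fin n)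
    (q : DState Stat (Fin n)) : ℤ :=
  if q.2.ncard < k ∨ (q.2.ncard = k ∧ i ∈ q.2) then -(G.w i q.1) else Wmax G

open Classical in
/-- Dimension `2n + i` of the weight function `v`, constraining the payoff with no deviation. -/
noncomputable def vPay (G : CGame Stat (Fin n) Act) [Fintype Stat] (i : Fin n)
    (q : DState Stat (Fin n)) : ℤ :=
  if q.2 = ∅ then G.w i q.1 else Wmax G

open Classical in
/-- Dimension `3n + i` of the weight function `v`, constraining the payoff with no deviation. -/
noncomputable def vPayNeg (G : CGame Stat (Fin n) Act) [Fintype Stat] (i : Fin n)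
    (q : DState Stat (Fin n)) : ℤ :=
  if q.2 = ∅ then -(G.w i q.1) else Wmax G

end Weights

section Aux

open Filter

/-- `limsup (-f) = - liminf f` for real sequences (unconditionally, thanks to ℝ junk values). -/
lemma real_limsup_neg (f : ℕ → ℝ) :
    limsup (fun m => -(f m)) atTop = -liminf f atTop := by
  have hset : {a : ℝ | ∀ᶠ m in atTop, -(f m) ≤ a} = -{a : ℝ | ∀ᶠ m in atTop, a ≤ f m} := by
    ext a
    simp only [Set.mem_neg, Set.mem_setOf_eq, neg_le]
  rw [Filter.limsup_eq, Filter.liminf_eq, hset, Real.sInf_def, neg_neg]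

lemma aux_abs_w_le {Stat Act : Type} {n : ℕ} [Fintype Stat]
    (G : CGame Stat (Fin n) Act) (j : Fin n) (s : Stat) :
    |(G.w j s : ℝ)| ≤ (Wmax G : ℝ) := by
  have h : (G.w j s).natAbs ≤ (Finset.univ : Finset (Fin n × Stat)).sup
      fun x => (G.w x.1 x.2).natAbs :=
    Finset.le_sup (f := fun x : Fin n × Stat => (G.w x.1 x.2).natAbs)
      (Finset.mem_univ (j, s))
  rw [← Int.cast_abs, Int.abs_eq_natAbs]
  unfold Wmax
  exact_mod_cast h

lemma aux_tendsto_avg (u : ℕ → ℤ) (c : ℤ) (L : ℕ) (h : ∀ l, L ≤ l → u l = c) :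
    Filter.Tendsto (fun m : ℕ => (∑ l ∈ Finset.range (m + 1), (u l : ℝ)) / m)
      atTop (nhds (c : ℝ)) := by
  set C : ℝ := ∑ l ∈ Finset.range L, (u l : ℝ) with hC
  have hev : (fun m : ℕ => (∑ l ∈ Finset.range (m + 1), (u l : ℝ)) / m) =ᶠ[atTop]
      fun m : ℕ => (C + (1 - (L : ℝ)) * c) * (m : ℝ)⁻¹ + c := by
    filter_upwards [eventually_ge_atTop (max L 1)] with m hm
    have hL : L ≤ m := le_trans (le_max_left _ _) hm
    have hm1 : 1 ≤ m := le_trans (le_max_right _ _) hm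
    have hmne : (m : ℝ) ≠ 0 := by positivity
    have hsum : (∑ l ∈ Finset.range (m + 1), (u l : ℝ)) =
        C + ((m : ℝ) + 1 - L) * c := by
      rw [← Finset.sum_range_add_sum_Ico _ (Nat.le_succ_of_le hL), hC]
      congr 1
      rw [Finset.sum_congr rfl (fun l hl => by
        rw [h l (Finset.mem_Ico.mp hl).1]), Finset.sum_const, Nat.card_Ico,
        nsmul_eq_mul]
      congr 1
      push_cast [Nat.cast_sub (Nat.le_succ_of_le hL)]
      ring
    rw [hsum]
    field_simp
    ring
  refine Tendsto.congr' hev.symm ?_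
  have h0 : Filter.Tendsto (fun m : ℕ => (C + (1 - (L : ℝ)) * c) * (m : ℝ)⁻¹ + c)
      atTop (nhds ((C + (1 - (L : ℝ)) * c) * 0 + c)) :=
    ((tendsto_const_nhds.mul tendsto_inv_atTop_nhds_zero_nat).add tendsto_const_nhds)
  simpa using h0

end Aux

theorem statement7 {Stat Act : Type} {n : ℕ} [Fintype Stat] [Fintype Act]
    (G : CGame Stat (Fin n) Act) (p : Fin n → ℝ)
    (hp : ∀ i : Fin n, |p i| ≤ (Wmax G : ℝ))
    (ρ : DPlay Stat (Fin n) Act)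
    (hρ : ∀ l, ρ.state (l + 1) = DTab G (ρ.state l) (ρ.eveMove l) (ρ.adamMove l))
    (i : Fin n) :
    (delta ρ = ∅ → payoffPlay G i (projPlay ρ) = p i) ↔
      (p i ≤ MP (vPay G i) ρ ∧ -(p i) ≤ MPSup (vPayNeg G i) ρ) := by
  by_cases hδ : delta ρ = ∅
  · -- no deviation anywhere
    have hemp : ∀ l, (ρ.state l).2 = ∅ := Set.iUnion_eq_empty.mp hδ
    set f : ℕ → ℝ :=
      fun m => (∑ l ∈ Finset.range (m + 1), (G.w i (ρ.state l).1 : ℝ)) / m with hf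
    have h1 : MP (vPay G i) ρ = Filter.liminf f atTop := by
      unfold MP
      congr 1
      funext m
      congr 1
      exact Finset.sum_congr rfl fun l _ => by rw [vPay, if_pos (hemp l)]
    have h2 : MPSup (vPayNeg G i) ρ = Filter.limsup (fun m => -(f m)) atTop := by
      unfold MPSup
      congr 1
      funext m
      rw [hf, ← neg_div, ← Finset.sum_neg_distrib]
      congr 1
      exact Finset.sum_congr rfl fun l _ => by
        rw [vPayNeg, if_pos (hemp l)]; push_cast; ring
    have h3 : payoffPlay G i (projPlay ρ) = Filter.liminf f atTop := rfl
    rw [h1, h2, h3, real_limsup_neg]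
    constructor
    · intro h
      have := h hδ
      constructor <;> linarith
    · rintro ⟨ha, hb⟩ _
      linarith
  · -- some deviation occurs
    obtain ⟨l0, hl0⟩ : ∃ l0, (ρ.state l0).2 ≠ ∅ := by
      by_contra hcon
      push_neg at hcon
      exact hδ (Set.iUnion_eq_empty.mpr hcon)
    have hmono : ∀ l, l0 ≤ l → (ρ.state l).2 ≠ ∅ := by
      intro l hl
      induction l with
      | zero => simpa [Nat.le_zero.mp hl] using hl0
      | succ k ih =>
        rcases Nat.lt_or_ge l0 (k + 1) with hlt | hge
        · have hk := ih (Nat.lt_succ_iff.mp hlt)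
          rw [hρ k]
          simp only [DTab]
          intro hcontra
          exact hk (Set.union_empty_iff.mp hcontra).1
        · have : l0 = k + 1 := le_antisymm hl hge
          rw [← this]; exact hl0
    have hMP : MP (vPay G i) ρ = (Wmax G : ℝ) := by
      refine Filter.Tendsto.liminf_eq ?_
      exact aux_tendsto_avg (fun l => vPay G i (ρ.state l)) (Wmax G) l0
        (fun l hl => by simp only [vPay]; rw [if_neg (by simp [hmono l hl])])
    have hMPS : MPSup (vPayNeg G i) ρ = (Wmax G : ℝ) := by
      refine Filter.Tendsto.limsup_eq ?_
      exact aux_tendsto_avg (fun l => vPayNeg G i (ρ.state l)) (Wmax G) l0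
        (fun l hl => by simp only [vPayNeg]; rw [if_neg (by simp [hmono l hl])])
    rw [hMP, hMPS]
    have hpi := abs_le.mp (hp i)
    constructor
    · intro _
      constructor <;> linarith
    · intro _ h
      exact absurd h hδ
end

section
/- Let G be a weighted concurrent game with players Agt = {A_1,…,A_n}, σ_Agt a strategy profile with payoff vector p = payoff(σ_Agt), and v the multidimensional weight function on the deviator game D(G). If ρ is an outcome of the Eve strategy π(σ_Agt) in D(G), then ρ satisfies the resilience objective Re(k,p) if, and only if, for every player A_i, MPSup_{v_{n+i}}(ρ) ≥ −p(A_i). -/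
open Filter

/-! Along an outcome of `π(σ_Agt)` the deviator component only grows, so (there being finitely
many players) it is eventually constant, equal to `δ(ρ)`. From then on the weight `v_{n+i}` is
either `-w_{A_i}` or the constant `W`, and a mean payoff does not see a finite prefix: hence
`MPSup v_{n+i}(ρ)` is `-payoff_{A_i}(π(ρ))` when `A_i` is constrained by `Re(k,p)` and `W`
otherwise. Since every payoff is at least `-W`, the inequalities `MPSup v_{n+i}(ρ) ≥ -p(A_i)` say
exactly that each constrained player gets at most `p(A_i)`. -/

open Topology

lemma limsup_add_eq_of_tendsto_zero {ι : Type*} {F : Filter ι} [F.NeBot] {f g : ι → ℝ}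
    (hf_le : IsBoundedUnder (· ≤ ·) F f) (hf_ge : IsBoundedUnder (· ≥ ·) F f)
    (hg : Tendsto g F (𝓝 0)) :
    limsup (f + g) F = limsup f F := by
  have hg_le := hg.isBoundedUnder_le
  have hg_ge := hg.isBoundedUnder_ge
  apply le_antisymm
  · simpa [hg.limsup_eq] using
      limsup_add_le hf_ge hf_le hg_ge.isCoboundedUnder_le hg_le
  · simpa [hg.liminf_eq] using
      le_limsup_add hf_le hf_ge.isCoboundedUnder_le hg_le hg_ge

lemma limsup_neg_eq_neg_liminf {ι : Type*} {F : Filter ι} [F.NeBot] {f : ι → ℝ}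
    (hf_le : IsBoundedUnder (· ≤ ·) F f) (hf_ge : IsBoundedUnder (· ≥ ·) F f) :
    limsup (-f) F = -liminf f F := by
  simpa [Pi.neg_def] using limsup_const_sub F f 0 hf_le.isCoboundedUnder_ge hf_ge

section MeanSeq

/-- As in `payoffPlay` and `MPSup`, the sum of the first `m + 1` terms is divided by `m`;
the value at `m = 0` is the junk `x / 0 = 0`, invisible to `liminf` and `limsup`. -/
noncomputable def meanSeq (u : ℕ → ℝ) (m : ℕ) : ℝ :=
  (∑ l ∈ Finset.range (m + 1), u l) / m

lemma meanSeq_neg (u : ℕ → ℝ) : meanSeq (fun l => -u l) = -meanSeq u := by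
  funext m
  simp [meanSeq, neg_div]

lemma meanSeq_add_sub (u u' : ℕ → ℝ) :
    meanSeq u = meanSeq u' + meanSeq (fun l => u l - u' l) := by
  funext m
  simp only [meanSeq, Pi.add_apply, Finset.sum_sub_distrib]
  ring

variable {u u' : ℕ → ℝ} {B : ℝ}

lemma meanSeq_mono (h : ∀ l, u l ≤ u' l) (m : ℕ) : meanSeq u m ≤ meanSeq u' m :=
  div_le_div_of_nonneg_right (Finset.sum_le_sum fun l _ => h l) m.cast_nonneg

lemma tendsto_meanSeq_const (c : ℝ) : Tendsto (meanSeq fun _ => c) atTop (𝓝 c) := by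
  have hlim : Tendsto (fun m : ℕ => c + c / m) atTop (𝓝 c) := by
    simpa using tendsto_const_nhds.add (tendsto_const_div_atTop_nhds_zero_nat c)
  refine hlim.congr' ?_
  filter_upwards [eventually_ne_atTop 0] with m hm
  simp only [meanSeq, Finset.sum_const, Finset.card_range, nsmul_eq_mul]
  field_simp
  push_cast
  ring

lemma tendsto_meanSeq_of_eventually_zero (h : ∀ᶠ l in atTop, u l = 0) :
    Tendsto (meanSeq u) atTop (𝓝 0) := by
  obtain ⟨N, hN⟩ := eventually_atTop.1 h
  refine (tendsto_const_div_atTop_nhds_zero_nat (∑ l ∈ Finset.range N, u l)).congr' ?_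
  filter_upwards [eventually_ge_atTop N] with m hm
  rw [meanSeq, Finset.sum_subset (Finset.range_subset_range.2 (show N ≤ m + 1 by omega))]
  intro l _ hl
  exact hN l (by simpa using hl)

lemma isBoundedUnder_le_meanSeq (h : ∀ l, u l ≤ B) :
    IsBoundedUnder (· ≤ ·) atTop (meanSeq u) :=
  (tendsto_meanSeq_const B).isBoundedUnder_le.mono_le (Eventually.of_forall (meanSeq_mono h))

lemma isBoundedUnder_ge_meanSeq (h : ∀ l, B ≤ u l) :
    IsBoundedUnder (· ≥ ·) atTop (meanSeq u) :=
  (tendsto_meanSeq_const B).isBoundedUnder_ge.mono_ge (Eventually.of_forall (meanSeq_mono h))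

lemma neg_le_liminf_meanSeq (h : ∀ l, |u l| ≤ B) : -B ≤ liminf (meanSeq u) atTop := by
  rw [← (tendsto_meanSeq_const (-B)).liminf_eq]
  exact liminf_le_liminf (Eventually.of_forall (meanSeq_mono fun l => (abs_le.1 (h l)).1))
    (tendsto_meanSeq_const (-B)).isBoundedUnder_ge
    (isBoundedUnder_le_meanSeq fun l => (abs_le.1 (h l)).2).isCoboundedUnder_ge

lemma limsup_meanSeq_congr (hu' : ∀ l, |u' l| ≤ B)
    (h : ∀ᶠ l in atTop, u l = u' l) :
    limsup (meanSeq u) atTop = limsup (meanSeq u') atTop := by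
  rw [meanSeq_add_sub u u']
  exact limsup_add_eq_of_tendsto_zero
    (isBoundedUnder_le_meanSeq fun l => (abs_le.1 (hu' l)).2)
    (isBoundedUnder_ge_meanSeq fun l => (abs_le.1 (hu' l)).1)
    (tendsto_meanSeq_of_eventually_zero (h.mono fun l hl => sub_eq_zero.2 hl))

end MeanSeq

section DeviatorGame

variable {Stat Agt Act : Type}

lemma IsDPlayFrom.monotone_deviators {G : CGame Stat Agt Act} {q : DState Stat Agt}
    {σE : EveStrategy Stat Agt Act} {ρ : DPlay Stat Agt Act} (hρ : IsDPlayFrom G q σE ρ) :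
    Monotone fun j => (ρ.state j).2 :=
  monotone_nat_of_le_succ fun j => by
    rw [(hρ.2 j).2]
    exact Set.subset_union_left

lemma eventually_deviators_eq_delta [Finite Agt] {ρ : DPlay Stat Agt Act}
    (hmono : Monotone fun j => (ρ.state j).2) :
    ∀ᶠ j in atTop, (ρ.state j).2 = delta ρ := by
  obtain ⟨N, hN⟩ := WellFoundedGT.monotone_chain_condition ⟨_, hmono⟩
  have hdelta : delta ρ = (ρ.state N).2 :=
    (Set.iUnion_subset fun j => (hmono (le_max_left j N)).trans
      (hN _ (le_max_right j N)).symm.le).antisymm (Set.subset_iUnion (fun j => (ρ.state j).2) N)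
  filter_upwards [eventually_ge_atTop N] with j hj
  rw [hdelta]
  exact (hN j hj).symm

lemma mem_ReObj_iff (G : CGame Stat Agt Act) (k : ℕ) (p : Agt → ℝ) (ρ : DPlay Stat Agt Act) :
    ρ ∈ ReObj G k p ↔ ∀ A, (delta ρ).ncard < k ∨ ((delta ρ).ncard = k ∧ A ∈ delta ρ) →
      payoffPlay G A (projPlay ρ) ≤ p A := by
  simp only [ReObj, Set.mem_union, Set.mem_ofPred_eq]
  rcases lt_trichotomy (delta ρ).ncard k with hlt | heq | hgt
  · simp [hlt, hlt.ne, hlt.not_gt]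
  · simp [heq]
  · simp [hgt, hgt.ne', hgt.not_gt]

end DeviatorGame

section Weights

variable {Stat Act : Type} {n : ℕ} [Fintype Stat]

lemma Wmax_nonneg (G : CGame Stat (Fin n) Act) : (0 : ℝ) ≤ Wmax G := by
  simp [Wmax]

lemma abs_w_le_Wmax (G : CGame Stat (Fin n) Act) (A : Fin n) (s : Stat) :
    |(G.w A s : ℝ)| ≤ Wmax G := by
  have h : (G.w A s).natAbs ≤ Finset.univ.sup fun x : Fin n × Stat => (G.w x.1 x.2).natAbs :=
    Finset.le_sup (f := fun x : Fin n × Stat => (G.w x.1 x.2).natAbs) (Finset.mem_univ (A, s))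
  rw [← Int.cast_abs, Int.abs_eq_natAbs, Wmax]
  exact_mod_cast h

lemma neg_Wmax_le_payoffPlay (G : CGame Stat (Fin n) Act) (A : Fin n)
    (ρ : Play Stat (Fin n) Act) : -(Wmax G : ℝ) ≤ payoffPlay G A ρ :=
  neg_le_liminf_meanSeq fun l => abs_w_le_Wmax G A (ρ.state l)

open Classical in
lemma MPSup_vRes_eq (G : CGame Stat (Fin n) Act) (k : ℕ) (i : Fin n) {ρ : DPlay Stat (Fin n) Act}
    {D : Set (Fin n)} (hD : ∀ᶠ j in atTop, (ρ.state j).2 = D) :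
    MPSup (vRes G k i) ρ = if D.ncard < k ∨ (D.ncard = k ∧ i ∈ D)
      then -payoffPlay G i (projPlay ρ) else Wmax G := by
  have hw : ∀ l, |(G.w i (ρ.state l).1 : ℝ)| ≤ Wmax G := fun l => abs_w_le_Wmax G i _
  change limsup (meanSeq fun l => (vRes G k i (ρ.state l) : ℝ)) atTop = _
  split_ifs with hcond
  · have hv : ∀ᶠ l in atTop, (vRes G k i (ρ.state l) : ℝ) = -(G.w i (ρ.state l).1 : ℝ) := by
      filter_upwards [hD] with l hl
      simp [vRes, hl, hcond]
    rw [limsup_meanSeq_congr (fun l => (abs_neg _).trans_le (hw l)) hv, meanSeq_neg,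
      limsup_neg_eq_neg_liminf (isBoundedUnder_le_meanSeq fun l => (abs_le.1 (hw l)).2)
        (isBoundedUnder_ge_meanSeq fun l => (abs_le.1 (hw l)).1)]
    rfl
  · have hv : ∀ᶠ l in atTop, (vRes G k i (ρ.state l) : ℝ) = Wmax G := by
      filter_upwards [hD] with l hl
      simp [vRes, hl, hcond]
    rw [limsup_meanSeq_congr (fun _ => (abs_of_nonneg (Wmax_nonneg G)).le) hv,
      (tendsto_meanSeq_const _).limsup_eq]

end Weights

theorem statement8_general {Stat Act : Type} {n : ℕ} [Fintype Stat]
    (G : CGame Stat (Fin n) Act) (σ : Profile Stat (Fin n) Act) (k : ℕ)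
    (ρ : DPlay Stat (Fin n) Act) (hρ : IsOutcome G (eveOf σ) ρ) :
    ρ ∈ ReObj G k (payoffProfile G σ) ↔
      ∀ i : Fin n, -(payoffProfile G σ i) ≤ MPSup (vRes G k i) ρ := by
  have hstable := eventually_deviators_eq_delta hρ.monotone_deviators
  rw [mem_ReObj_iff]
  refine forall_congr' fun i => ?_
  rw [MPSup_vRes_eq G k i hstable]
  split_ifs with hcond
  · simp [hcond]
  · simp only [hcond, false_imp_iff, true_iff]
    exact neg_le.1 (neg_Wmax_le_payoffPlay G i (outcomePlay G σ))

theorem statement8 {Stat Act : Type} {n : ℕ} [Fintype Stat] [Fintype Act]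
    (G : CGame Stat (Fin n) Act) (σ : Profile Stat (Fin n) Act) (k : ℕ)
    (ρ : DPlay Stat (Fin n) Act) (hρ : IsOutcome G (eveOf σ) ρ) :
    ρ ∈ ReObj G k (payoffProfile G σ) ↔
      ∀ i : Fin n, -(payoffProfile G σ i) ≤ MPSup (vRes G k i) ρ :=
  statement8_general G σ k ρ hρ
end
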